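/- arXiv:1502.04971 — 2 statements merged into one kernel-verified Lean document; each statement's English description precedes it below -/
import Mathlib

section
/- Let N > 1, let χ be an odd real Dirichlet character modulo N, and let B > 1 be an integer with gcd(B, N) = 1 and χ(B) = 1. Let e be the multiplicative order of B modulo N. Let x₁ be an integer with 1 ≤ x₁ ≤ N and gcd(x₁, N) = 1, and set x_i := ⟨B^{i−1}·x₁⟩ for 1 ≤ i ≤ e + 1 (so x_{e+1} = x₁) and a_i := (B·x_i − x_{i+1})/N for 1 ≤ i ≤ e. Then (B − 1)·(−(1/N)·Σ_{i=1}^{e} χ(x_i)·x_i) = −χ(x₁)·Σ_{i=1}^{e} a_i. -/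
/-! The points `x_i = ⟨B^(i-1) x₁⟩` all have the same character value, because `χ(B) = 1`,
and the cycle closes up (`x_{e+1} = x₁`), so the sum `∑ (B x_i - x_{i+1})` telescopes to
`(B - 1) ∑ x_i`. Both sides are therefore `-(B - 1) χ(x₁) (∑ x_i) / N`. -/

open Finset

theorem eq_of_modEq_of_mem_Icc {N a b : ℤ} (h : a ≡ b [ZMOD N]) (ha : 1 ≤ a ∧ a ≤ N)
    (hb : 1 ≤ b ∧ b ≤ N) : a = b := by
  have hlt : |b - a| < N := abs_lt.mpr ⟨by omega, by omega⟩
  linarith [Int.eq_zero_of_abs_lt_dvd h.dvd hlt]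

theorem map_pow_mul_eq_of_map_eq_one {M R : Type*} [Monoid M] [Monoid R] {χ : M → R}
    (hmul : ∀ a b, χ (a * b) = χ a * χ b) {B : M} (hB : χ B = 1) (k : ℕ) (x : M) :
    χ (B ^ k * x) = χ x := by
  induction k with
  | zero => rw [pow_zero, one_mul]
  | succ k ih => rw [pow_succ', mul_assoc, hmul, hB, ih, one_mul]

theorem sum_range_mul_sub_succ_of_eq {R : Type*} [CommRing R] (f : ℕ → R) (b : R) {n : ℕ}
    (hf : f n = f 0) :
    ∑ i ∈ range n, (b * f i - f (i + 1)) = (b - 1) * ∑ i ∈ range n, f i := by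
  have hzero : ∑ i ∈ range n, (f (i + 1) - f i) = 0 := by rw [sum_range_sub, hf, sub_self]
  calc ∑ i ∈ range n, (b * f i - f (i + 1))
      = (b - 1) * ∑ i ∈ range n, f i - ∑ i ∈ range n, (f (i + 1) - f i) := by
        rw [mul_sum, ← sum_sub_distrib]; exact sum_congr rfl fun _ _ ↦ by ring
    _ = (b - 1) * ∑ i ∈ range n, f i := by rw [hzero, sub_zero]

theorem sum_Icc_one_eq_sum_range {M : Type*} [AddCommMonoid M] (f : ℕ → M) (n : ℕ) :
    ∑ i ∈ Icc 1 n, f i = ∑ i ∈ range n, f (i + 1) := by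
  rw [range_eq_Ico, sum_Ico_add' f 0 n 1]; rfl

theorem cycle_formula_chiB_one_general (N : ℤ) (χ : ℤ → ℤ)
    (hmul : ∀ a b, χ (a * b) = χ a * χ b)
    (hper : ∀ a b, a ≡ b [ZMOD N] → χ a = χ b)
    (B : ℤ) (hχB : χ B = 1)
    (e : ℕ) (heB : B ^ e ≡ 1 [ZMOD N])
    (x₁ : ℤ)
    (r : ℤ → ℤ) (hr : ∀ z, 1 ≤ r z ∧ r z ≤ N ∧ r z ≡ z [ZMOD N]) :
    ((B : ℚ) - 1) *
        (-(1 / (N : ℚ)) *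
          ∑ i ∈ Finset.Icc 1 e,
            (χ (r (B ^ (i - 1) * x₁)) : ℚ) * (r (B ^ (i - 1) * x₁) : ℚ)) =
      -(χ x₁ : ℚ) *
        ∑ i ∈ Finset.Icc 1 e,
          ((B * r (B ^ (i - 1) * x₁) - r (B ^ i * x₁) : ℤ) : ℚ) / (N : ℚ) := by
  set x : ℕ → ℤ := fun i ↦ r (B ^ i * x₁)
  have hχx (i : ℕ) : χ (x i) = χ x₁ :=
    (hper _ _ (hr _).2.2).trans (map_pow_mul_eq_of_map_eq_one hmul hχB i x₁)
  have hcycle : x e = x 0 := by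
    refine eq_of_modEq_of_mem_Icc ?_ ⟨(hr _).1, (hr _).2.1⟩ ⟨(hr _).1, (hr _).2.1⟩
    have hpow : B ^ e * x₁ ≡ B ^ 0 * x₁ [ZMOD N] := by simpa using heB.mul_right x₁
    exact (hr _).2.2.trans (hpow.trans (hr _).2.2.symm)
  have hleft :
      ∑ i ∈ range e, (χ (x i) : ℚ) * x i = χ x₁ * ∑ i ∈ range e, (x i : ℚ) := by
    simp only [hχx, mul_sum]
  have hright : ∑ i ∈ range e, ((B * x i - x (i + 1) : ℤ) : ℚ) =
      (B - 1) * ∑ i ∈ range e, (x i : ℚ) := by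
    push_cast
    exact sum_range_mul_sub_succ_of_eq (fun i ↦ (x i : ℚ)) _ (by simp only [hcycle])
  rw [sum_Icc_one_eq_sum_range, sum_Icc_one_eq_sum_range, ← sum_div]
  simp only [Nat.add_sub_cancel]
  rw [hleft, hright]
  ring

/-- the cycle contribution formula when χ(B) = 1.  Here `χ` is an
odd real Dirichlet character modulo `N`, `e` is the multiplicative order of `B`
modulo `N`, `r z` plays the role of `⟨z⟩` (the unique `y` with `1 ≤ y ≤ N` and
`z ≡ y (mod N)`), `x_i = r (B^(i-1)·x₁)` and `a_i = (B·x_i − x_{i+1})/N`. -/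
theorem cycle_formula_chiB_one (N : ℤ) (hN : 1 < N) (χ : ℤ → ℤ)
    (hval : ∀ a, χ a = 0 ∨ χ a = 1 ∨ χ a = -1)
    (hmul : ∀ a b, χ (a * b) = χ a * χ b)
    (hper : ∀ a b, a ≡ b [ZMOD N] → χ a = χ b)
    (hzero : ∀ a, χ a = 0 ↔ Int.gcd a N ≠ 1)
    (hodd : χ (-1) = -1)
    (B : ℤ) (hB : 1 < B) (hBN : Int.gcd B N = 1) (hχB : χ B = 1)
    (e : ℕ) (he : 0 < e) (heB : B ^ e ≡ 1 [ZMOD N])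
    (hemin : ∀ j : ℕ, 0 < j → j < e → ¬ B ^ j ≡ 1 [ZMOD N])
    (x₁ : ℤ) (hx₁1 : 1 ≤ x₁) (hx₁N : x₁ ≤ N) (hx₁ : Int.gcd x₁ N = 1)
    (r : ℤ → ℤ) (hr : ∀ z, 1 ≤ r z ∧ r z ≤ N ∧ r z ≡ z [ZMOD N]) :
    ((B : ℚ) - 1) *
        (-(1 / (N : ℚ)) *
          ∑ i ∈ Finset.Icc 1 e,
            (χ (r (B ^ (i - 1) * x₁)) : ℚ) * (r (B ^ (i - 1) * x₁) : ℚ)) =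
      -(χ x₁ : ℚ) *
        ∑ i ∈ Finset.Icc 1 e,
          ((B * r (B ^ (i - 1) * x₁) - r (B ^ i * x₁) : ℤ) : ℚ) / (N : ℚ) :=
  cycle_formula_chiB_one_general N χ hmul hper B hχB e heB x₁ r hr
end

section
/- Let N > 1, let χ be an odd real Dirichlet character modulo N, and let B ≥ 2 be an integer with gcd(B, N) = 1 admitting a factorization B = B₁·B₂ with 1 < B₁ < B. Then Σ_{k=0}^{⌊B₁/2⌋−1} (B₁ − 1 − 2k)·Σ_{j=0}^{B₂−1} E_{k·B₂+j}(B) = (B₁ − χ(B₁))·h. -/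
/-- `E_k(B) = Σ χ(x)`, the sum of `χ(x)` over all integers `x` with
`kN/B < x < (k+1)N/B` (for `0 ≤ k ≤ B−1` these integers all lie in `[1, N]`,
and the inequalities are rewritten as `kN < Bx` and `Bx < (k+1)N`). -/
noncomputable def Esum (N : ℤ) (χ : ℤ → ℤ) (B k : ℤ) : ℤ :=
  ∑ x ∈ (Finset.Icc (1 : ℤ) N).filter (fun x => k * N < B * x ∧ B * x < (k + 1) * N), χ x

noncomputable def hcl (N : ℤ) (χ : ℤ → ℤ) : ℚ :=
  -(1 / (N : ℚ)) * ∑ x ∈ Finset.Icc (1 : ℤ) N, (χ x : ℚ) * (x : ℚ)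

/-! Summing `E_{kB₂+j}(B)` over `0 ≤ j < B₂` merges the subintervals into `E_k(B₁)`, so it
suffices to treat a single `B` coprime to `N`. With `M = Σ χ(x) x` and `T = Σ χ(x) ⌊Bx/N⌋`,
splitting `Bx = N ⌊Bx/N⌋ + (Bx mod N)` and using that `x ↦ Bx mod N` permutes the residues prime
to `N` gives `(B - χ(B)) M = N T`, and grouping by `k = ⌊Bx/N⌋` gives `T = Σ_k k E_k(B)`. Since
`χ` is odd, `x ↦ N - x` shows `E_{B-1-k}(B) = -E_k(B)`, which folds `-Σ_k k E_k(B)` into the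
half sum `Σ_{k < B/2} (B - 1 - 2k) E_k(B)`. -/

open Finset

lemma Int.ediv_eq_iff_of_not_dvd {N a : ℤ} (hN : 0 < N) (ha : ¬N ∣ a) (k : ℤ) :
    a / N = k ↔ k * N < a ∧ a < (k + 1) * N := by
  have hne : k * N ≠ a := fun h => ha ⟨k, by rw [← h, mul_comm]⟩
  rw [Int.ediv_eq_iff_of_pos hN, add_one_mul]
  exact ⟨fun h => ⟨lt_of_le_of_ne h.1 hne, h.2⟩, fun h => ⟨h.1.le, h.2⟩⟩

lemma sum_Icc_one_eq_sum_Ioo {M : Type*} [AddCommMonoid M] {N : ℤ} (hN : 0 < N) {f : ℤ → M}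
    (hf : f N = 0) : ∑ x ∈ Icc 1 N, f x = ∑ x ∈ Ioo 0 N, f x := by
  rw [show Icc 1 N = insert N (Ioo 0 N) by ext; simp; omega, sum_insert right_notMem_Ioo, hf,
    zero_add]

lemma sum_filter_ediv_eq_sum_Icc_sum_filter {ι M : Type*} [AddCommMonoid M] (s : Finset ι)
    (q : ι → ℤ) (f : ι → M) {c : ℤ} (hc : 0 < c) (k : ℤ) :
    ∑ x ∈ s with q x / c = k, f x = ∑ j ∈ Icc 0 (c - 1), ∑ x ∈ s with q x = k * c + j, f x := by
  have hdiv : ∀ x, q x / c = k ↔ k * c ≤ q x ∧ q x < k * c + c :=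
    fun x => Int.ediv_eq_iff_of_pos hc
  rw [← sum_fiberwise_of_maps_to (g := fun x => q x - k * c) (t := Icc 0 (c - 1))]
  · refine sum_congr rfl fun j hj => ?_
    rw [mem_Icc] at hj
    rw [filter_filter]
    refine sum_congr (filter_congr fun x _ => ?_) fun _ _ => rfl
    rw [hdiv]
    omega
  · intro x hx
    rw [mem_filter, hdiv] at hx
    rw [mem_Icc]
    omega

lemma sum_Ioo_comp_mul_emod {M : Type*} [AddCommMonoid M] {N B : ℤ} (hBN : IsCoprime B N)
    (g : ℤ → M) : ∑ x ∈ Ioo 0 N, g (B * x % N) = ∑ x ∈ Ioo 0 N, g x := by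
  have mem : ∀ {a : ℤ}, IsCoprime a N → ∀ x ∈ Ioo 0 N, a * x % N ∈ Ioo 0 N := by
    intro a ha x hx
    rw [mem_Ioo] at hx ⊢
    have hN : N ≠ 0 := by omega
    refine ⟨lt_of_le_of_ne (Int.emod_nonneg _ hN) fun h => ?_, Int.emod_lt_of_pos _ (by omega)⟩
    have hdvd : N ∣ x := ha.symm.dvd_of_dvd_mul_left (Int.dvd_of_emod_eq_zero h.symm)
    exact absurd (Int.le_of_dvd hx.1 hdvd) (by omega)
  have inv : ∀ {a b : ℤ}, a * b ≡ 1 [ZMOD N] → ∀ y ∈ Ioo 0 N, a * (b * y % N) % N = y := by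
    intro a b hab y hy
    rw [mem_Ioo] at hy
    have : a * (b * y % N) ≡ y [ZMOD N] :=
      calc a * (b * y % N) ≡ a * (b * y) [ZMOD N] := (Int.mod_modEq _ _).mul_left a
        _ = a * b * y := (mul_assoc a b y).symm
        _ ≡ 1 * y [ZMOD N] := hab.mul_right y
        _ = y := one_mul y
    rw [this.eq, Int.emod_eq_of_lt hy.1.le hy.2]
  obtain ⟨C, v, hCB⟩ := hBN
  have hCB' : C * B ≡ 1 [ZMOD N] := Int.modEq_iff_dvd.2 ⟨v, by linear_combination -hCB⟩
  have hBC' : B * C ≡ 1 [ZMOD N] := mul_comm B C ▸ hCB'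
  exact sum_nbij' (B * · % N) (C * · % N) (mem ⟨C, v, hCB⟩)
    (mem ⟨B, v, by linear_combination hCB⟩) (inv hCB') (inv hBC') fun _ _ => rfl

lemma sum_Icc_half_mul_eq_neg_sum_mul (B : ℤ) (G : ℤ → ℤ) (hG : ∀ k, G (B - 1 - k) = -G k) :
    ∑ k ∈ Icc 0 (B / 2 - 1), (B - 1 - 2 * k) * G k = -∑ k ∈ Icc 0 (B - 1), k * G k := by
  have fold : ∑ k ∈ Icc 0 (B - 1), (B - 1 - 2 * k) * G k
      = 2 * ∑ k ∈ Icc 0 (B / 2 - 1), (B - 1 - 2 * k) * G k := by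
    have hsub : Icc 0 (B / 2 - 1) ∪ Icc (B - B / 2) (B - 1) ⊆ Icc 0 (B - 1) := by
      intro k; simp only [mem_union, mem_Icc]; omega
    -- the only index left out is the centre `k = (B - 1) / 2` (for odd `B`), whose weight is `0`
    rw [← sum_subset hsub fun k hk hk' => ?_]
    · rw [sum_union (disjoint_left.2 fun k => by simp only [mem_Icc]; omega), two_mul]
      congr 1
      refine sum_equiv (Equiv.subLeft (B - 1)) (fun k => ?_) fun k _ => ?_
      · simp only [mem_Icc, Equiv.subLeft_apply]; omega
      · rw [Equiv.subLeft_apply, hG]; ring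
    · simp only [mem_union, mem_Icc] at hk hk'
      rw [show B - 1 - 2 * k = 0 by omega, zero_mul]
  have reflect : ∑ k ∈ Icc 0 (B - 1), (B - 1 - k) * G k = ∑ k ∈ Icc 0 (B - 1), k * -G k :=
    sum_equiv (Equiv.subLeft (B - 1)) (fun k => by simp only [mem_Icc, Equiv.subLeft_apply]; omega)
      fun k _ => by rw [Equiv.subLeft_apply, hG, neg_neg]
  have full : ∑ k ∈ Icc 0 (B - 1), (B - 1 - 2 * k) * G k = -2 * ∑ k ∈ Icc 0 (B - 1), k * G k := by
    calc _ = ∑ k ∈ Icc 0 (B - 1), ((B - 1 - k) * G k - k * G k) := sum_congr rfl fun _ _ => by ring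
      _ = _ := by rw [sum_sub_distrib, reflect]; simp only [mul_neg, sum_neg_distrib]; ring
  linarith

section Esum

variable {N : ℤ} {χ : ℤ → ℤ}

lemma chi_eq_zero_of_dvd_mul (hN : 1 < N) (hper : ∀ a b, a ≡ b [ZMOD N] → χ a = χ b)
    (hzero : ∀ a, χ a = 0 ↔ Int.gcd a N ≠ 1) {B x : ℤ} (hBN : IsCoprime B N) (hx : N ∣ B * x) :
    χ x = 0 := by
  rw [hper x 0 (Int.modEq_zero_iff_dvd.2 (hBN.symm.dvd_of_dvd_mul_left hx))]
  exact (hzero 0).2 (by rw [Int.gcd_zero_left]; omega)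

lemma Esum_eq_sum_Ioo (hN : 0 < N) (hχN : χ N = 0) (B k : ℤ) :
    Esum N χ B k = ∑ x ∈ Ioo 0 N with k * N < B * x ∧ B * x < (k + 1) * N, χ x := by
  rw [Esum, sum_filter, sum_filter]
  exact sum_Icc_one_eq_sum_Ioo hN (by simp [hχN])

lemma Esum_eq_sum_filter_ediv (hN : 0 < N) {B : ℤ} (hχ : ∀ x, N ∣ B * x → χ x = 0) (k : ℤ) :
    Esum N χ B k = ∑ x ∈ Ioo 0 N with B * x / N = k, χ x := by
  rw [Esum_eq_sum_Ioo hN (hχ N (dvd_mul_left N B)), sum_filter, sum_filter]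
  refine sum_congr rfl fun x _ => ?_
  by_cases hx : χ x = 0
  · simp [hx]
  · exact if_congr (Int.ediv_eq_iff_of_not_dvd hN (fun h => hx (hχ x h)) k).symm rfl rfl

lemma Esum_sub_one_sub (hN : 0 < N) (hχN : χ N = 0) (hneg : ∀ x, χ (N - x) = -χ x) (B k : ℤ) :
    Esum N χ B (B - 1 - k) = -Esum N χ B k := by
  rw [Esum_eq_sum_Ioo hN hχN, Esum_eq_sum_Ioo hN hχN, ← sum_neg_distrib]
  refine sum_equiv (Equiv.subLeft N) (fun x => ?_) fun x _ => ?_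
  · simp only [mem_filter, mem_Ioo, Equiv.subLeft_apply]
    constructor <;> rintro ⟨⟨_, _⟩, _, _⟩ <;> exact ⟨⟨by omega, by omega⟩, by linarith, by linarith⟩
  · rw [Equiv.subLeft_apply, hneg, neg_neg]

lemma sum_mul_Esum (hN : 0 < N) {B : ℤ} (hB : 0 < B) (hχ : ∀ x, N ∣ B * x → χ x = 0) :
    ∑ k ∈ Icc 0 (B - 1), k * Esum N χ B k = ∑ x ∈ Ioo 0 N, χ x * (B * x / N) := by
  have hmaps : ∀ x ∈ Ioo 0 N, B * x / N ∈ Icc 0 (B - 1) := by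
    intro x hx
    rw [mem_Ioo] at hx
    rw [mem_Icc, Int.le_sub_one_iff]
    exact ⟨Int.ediv_nonneg (by nlinarith) hN.le, Int.ediv_lt_of_lt_mul hN (by nlinarith)⟩
  simp_rw [Esum_eq_sum_filter_ediv hN hχ, mul_sum]
  conv_rhs => rw [← sum_fiberwise_of_maps_to hmaps]
  exact sum_congr rfl fun k _ => sum_congr rfl fun x hx => by rw [(mem_filter.1 hx).2, mul_comm]

lemma sum_Icc_Esum_mul_add (hN : 0 < N) {B₁ B₂ : ℤ} (hB₂ : 0 < B₂)
    (hχ : ∀ x, N ∣ B₁ * B₂ * x → χ x = 0) (k : ℤ) :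
    ∑ j ∈ Icc 0 (B₂ - 1), Esum N χ (B₁ * B₂) (k * B₂ + j) = Esum N χ B₁ k := by
  have hχ₁ : ∀ x, N ∣ B₁ * x → χ x = 0 :=
    fun x hx => hχ x (by rw [mul_right_comm]; exact hx.mul_right B₂)
  simp_rw [Esum_eq_sum_filter_ediv hN hχ, Esum_eq_sum_filter_ediv hN hχ₁]
  rw [← sum_filter_ediv_eq_sum_Icc_sum_filter _ _ _ hB₂]
  refine sum_congr (filter_congr fun x _ => ?_) fun _ _ => rfl
  rw [Int.ediv_ediv_of_nonneg hN.le, show B₁ * B₂ * x = B₂ * (B₁ * x) by ring, mul_comm N,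
    Int.mul_ediv_mul_of_pos _ _ hB₂]

lemma sum_mul_emod_eq (hmul : ∀ a b, χ (a * b) = χ a * χ b)
    (hper : ∀ a b, a ≡ b [ZMOD N] → χ a = χ b) {B : ℤ} (hB : χ B * χ B = 1)
    (hBN : IsCoprime B N) :
    ∑ x ∈ Ioo 0 N, χ x * (B * x % N) = χ B * ∑ x ∈ Ioo 0 N, χ x * x := by
  rw [mul_sum, ← sum_Ioo_comp_mul_emod hBN fun y => χ B * (χ y * y)]
  refine sum_congr rfl fun x _ => ?_
  rw [hper _ _ (Int.mod_modEq _ _), hmul]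
  linear_combination (-(χ x * (B * x % N))) * hB

lemma Esum_class_number_formula (hN : 1 < N)
    (hval : ∀ a, χ a = 0 ∨ χ a = 1 ∨ χ a = -1)
    (hmul : ∀ a b, χ (a * b) = χ a * χ b)
    (hper : ∀ a b, a ≡ b [ZMOD N] → χ a = χ b)
    (hzero : ∀ a, χ a = 0 ↔ Int.gcd a N ≠ 1)
    (hodd : χ (-1) = -1) {B : ℤ} (hB : 0 < B) (hBN : IsCoprime B N) :
    ((∑ k ∈ Icc 0 (B / 2 - 1), (B - 1 - 2 * k) * Esum N χ B k : ℤ) : ℚ) =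
      ((B : ℚ) - χ B) * hcl N χ := by
  have hN0 : 0 < N := by omega
  have hχ : ∀ x, N ∣ B * x → χ x = 0 := fun x => chi_eq_zero_of_dvd_mul hN hper hzero hBN
  have hχN : χ N = 0 := hχ N (dvd_mul_left N B)
  have hneg : ∀ x, χ (N - x) = -χ x := fun x => by
    rw [hper _ (-1 * x) (Int.modEq_iff_dvd.2 ⟨-1, by ring⟩), hmul, hodd, neg_one_mul]
  have hχB : χ B * χ B = 1 := by
    have : χ B ≠ 0 := fun h => (hzero B).1 h (Int.isCoprime_iff_gcd_eq_one.1 hBN)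
    rcases hval B with h | h | h <;> simp_all
  set M := ∑ x ∈ Ioo 0 N, χ x * x
  set T := ∑ x ∈ Ioo 0 N, χ x * (B * x / N)
  have hdiv : B * M = N * T + χ B * M := by
    rw [← sum_mul_emod_eq hmul hper hχB hBN, mul_sum, mul_sum, ← sum_add_distrib]
    exact sum_congr rfl fun x _ => by
      linear_combination (-χ x) * Int.mul_ediv_add_emod (B * x) N
  have hS : ∑ k ∈ Icc 0 (B / 2 - 1), (B - 1 - 2 * k) * Esum N χ B k = -T := by
    rw [sum_Icc_half_mul_eq_neg_sum_mul B _ (Esum_sub_one_sub hN0 hχN hneg B),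
      sum_mul_Esum hN0 hB hχ]
  have hM : hcl N χ = -(M / N) := by
    rw [hcl, sum_Icc_one_eq_sum_Ioo hN0 (by simp [hχN])]
    simp only [M, Int.cast_sum, Int.cast_mul]
    ring
  have hNQ : (N : ℚ) ≠ 0 := by exact_mod_cast hN0.ne'
  rw [hS, hM, Int.cast_neg]
  field_simp
  have key : ((B : ℚ) - χ B) * M = N * T := by
    exact_mod_cast (by linear_combination hdiv : (B - χ B) * M = N * T)
  linear_combination key

end Esum

theorem Esum_class_number_formula_factor_general (N : ℤ) (hN : 1 < N) (χ : ℤ → ℤ)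
    (hval : ∀ a, χ a = 0 ∨ χ a = 1 ∨ χ a = -1)
    (hmul : ∀ a b, χ (a * b) = χ a * χ b)
    (hper : ∀ a b, a ≡ b [ZMOD N] → χ a = χ b)
    (hzero : ∀ a, χ a = 0 ↔ Int.gcd a N ≠ 1)
    (hodd : χ (-1) = -1)
    (B : ℤ) (hB : 2 ≤ B) (hBN : Int.gcd B N = 1)
    (B₁ B₂ : ℤ) (hfac : B = B₁ * B₂) (hB₁1 : 1 < B₁) :
    (((∑ k ∈ Finset.Icc (0 : ℤ) (B₁ / 2 - 1),
          (B₁ - 1 - 2 * k) * ∑ j ∈ Finset.Icc (0 : ℤ) (B₂ - 1), Esum N χ B (k * B₂ + j)) : ℤ) : ℚ) =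
      ((B₁ : ℚ) - (χ B₁ : ℚ)) * hcl N χ := by
  subst hfac
  have hB₂ : 0 < B₂ := pos_of_mul_pos_right (a := B₁) (by omega) (by omega)
  have hBN' : IsCoprime (B₁ * B₂) N := Int.isCoprime_iff_gcd_eq_one.2 hBN
  simp_rw [sum_Icc_Esum_mul_add (by omega) hB₂ fun _ => chi_eq_zero_of_dvd_mul hN hper hzero hBN']
  exact Esum_class_number_formula hN hval hmul hper hzero hodd (by omega) hBN'.of_mul_left_left

/-- Theorem 2, second part: if `B = B₁·B₂` with `1 < B₁ < B`, then
`Σ_{k=0}^{⌊B₁/2⌋−1} (B₁ − 1 − 2k)·Σ_{j=0}^{B₂−1} E_{kB₂+j}(B) = (B₁ − χ(B₁))·h`. -/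
theorem Esum_class_number_formula_factor (N : ℤ) (hN : 1 < N) (χ : ℤ → ℤ)
    (hval : ∀ a, χ a = 0 ∨ χ a = 1 ∨ χ a = -1)
    (hmul : ∀ a b, χ (a * b) = χ a * χ b)
    (hper : ∀ a b, a ≡ b [ZMOD N] → χ a = χ b)
    (hzero : ∀ a, χ a = 0 ↔ Int.gcd a N ≠ 1)
    (hodd : χ (-1) = -1)
    (B : ℤ) (hB : 2 ≤ B) (hBN : Int.gcd B N = 1)
    (B₁ B₂ : ℤ) (hfac : B = B₁ * B₂) (hB₁1 : 1 < B₁) (hB₁B : B₁ < B) :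
    (((∑ k ∈ Finset.Icc (0 : ℤ) (B₁ / 2 - 1),
          (B₁ - 1 - 2 * k) * ∑ j ∈ Finset.Icc (0 : ℤ) (B₂ - 1), Esum N χ B (k * B₂ + j)) : ℤ) : ℚ) =
      ((B₁ : ℚ) - (χ B₁ : ℚ)) * hcl N χ :=
  Esum_class_number_formula_factor_general N hN χ hval hmul hper hzero hodd B hB hBN B₁ B₂ hfac hB₁1
end
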